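/- arXiv:2211.15893 — 2 statements merged into one kernel-verified Lean document; each statement's English description precedes it below -/
import Mathlib

section
/- Let μ₀ = N(0, σ²), μ₁ = N(1, σ²) be Gaussians on ℝ, q ∈ (0,1], and μ = (1-q)μ₀ + qμ₁. Then for any integer α ≥ 2, E_{z∼μ₀}[(μ(z)/μ₀(z))^α] = Σ_{k=0}^{α} C(α,k) (1-q)^{α-k} q^k exp((k²-k)/(2σ²)). -/
/-- The Gaussian probability density function with mean `m` and variance `σ²`. -/
noncomputable def gpdf (m σ x : ℝ) : ℝ :=
  (Real.sqrt (2 * Real.pi * σ ^ 2))⁻¹ * Real.exp (-(x - m) ^ 2 / (2 * σ ^ 2))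

/-- Density of the mixture `(1-q)·N(0,σ²) + q·N(1,σ²)`. -/
noncomputable def mixpdf (q σ z : ℝ) : ℝ := (1 - q) * gpdf 0 σ z + q * gpdf 1 σ z

open MeasureTheory Real

lemma gpdf_pos (σ : ℝ) (hσ : 0 < σ) (m x : ℝ) : 0 < gpdf m σ x := by
  unfold gpdf
  have h : 0 < 2 * Real.pi * σ ^ 2 := by positivity
  positivity

lemma integrable_gpdf (m σ : ℝ) (hσ : 0 < σ) : Integrable (gpdf m σ) := by
  unfold gpdf
  apply Integrable.const_mul
  have h : ∀ x : ℝ, Real.exp (-(x - m) ^ 2 / (2 * σ ^ 2))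
      = Real.exp (-(1 / (2 * σ ^ 2)) * (x - m) ^ 2) := by
    intro x; congr 1; ring
  simp_rw [h]
  exact (integrable_exp_neg_mul_sq (by positivity)).comp_sub_right m

lemma integral_gpdf (m σ : ℝ) (hσ : 0 < σ) : ∫ x : ℝ, gpdf m σ x = 1 := by
  unfold gpdf
  rw [MeasureTheory.integral_const_mul]
  have h : ∀ x : ℝ, Real.exp (-(x - m) ^ 2 / (2 * σ ^ 2))
      = Real.exp (-(1 / (2 * σ ^ 2)) * (x - m) ^ 2) := by
    intro x; congr 1; ring
  simp_rw [h]
  rw [MeasureTheory.integral_sub_right_eq_self (fun x => Real.exp (-(1 / (2 * σ ^ 2)) * x ^ 2)) m]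
  rw [integral_gaussian]
  rw [inv_mul_eq_one₀ (by positivity)]
  congr 1
  rw [one_div, div_eq_mul_inv, inv_inv]
  ring

lemma exp_mul_gpdf_eq (σ : ℝ) (hσ : 0 < σ) (t x : ℝ) :
    Real.exp (t * x) * gpdf 0 σ x = Real.exp (t ^ 2 * σ ^ 2 / 2) * gpdf (t * σ ^ 2) σ x := by
  unfold gpdf
  rw [mul_left_comm, ← Real.exp_add, mul_left_comm, ← Real.exp_add]
  congr 2
  field_simp
  ring

lemma integrable_exp_mul_gpdf (σ : ℝ) (hσ : 0 < σ) (t : ℝ) :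
    Integrable (fun x => Real.exp (t * x) * gpdf 0 σ x) := by
  simp_rw [exp_mul_gpdf_eq σ hσ t]
  exact (integrable_gpdf _ _ hσ).const_mul _

lemma mgf_gpdf (σ : ℝ) (hσ : 0 < σ) (t : ℝ) :
    ∫ x : ℝ, Real.exp (t * x) * gpdf 0 σ x = Real.exp (t ^ 2 * σ ^ 2 / 2) := by
  simp_rw [exp_mul_gpdf_eq σ hσ t]
  rw [MeasureTheory.integral_const_mul, integral_gpdf _ _ hσ, mul_one]

lemma ratio_eq (σ : ℝ) (hσ : 0 < σ) (z : ℝ) :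
    gpdf 1 σ z / gpdf 0 σ z = Real.exp ((2 * z - 1) / (2 * σ ^ 2)) := by
  unfold gpdf
  have hC : (Real.sqrt (2 * Real.pi * σ ^ 2))⁻¹ ≠ 0 := by
    have h : 0 < 2 * Real.pi * σ ^ 2 := by positivity
    positivity
  rw [mul_div_mul_left _ _ hC, ← Real.exp_sub]
  congr 1
  field_simp
  ring

lemma pow_exp_gpdf_eq (σ : ℝ) (hσ : 0 < σ) (k : ℕ) (z : ℝ) :
    Real.exp ((2 * z - 1) / (2 * σ ^ 2)) ^ k * gpdf 0 σ z
      = Real.exp (-(k : ℝ) / (2 * σ ^ 2)) * (Real.exp (((k : ℝ) / σ ^ 2) * z) * gpdf 0 σ z) := by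
  rw [← Real.exp_nat_mul, ← mul_assoc, ← Real.exp_add]
  congr 2
  field_simp
  ring

lemma term_int (σ : ℝ) (hσ : 0 < σ) (k : ℕ) :
    ∫ z : ℝ, Real.exp ((2 * z - 1) / (2 * σ ^ 2)) ^ k * gpdf 0 σ z
      = Real.exp (((k : ℝ) ^ 2 - k) / (2 * σ ^ 2)) := by
  simp_rw [pow_exp_gpdf_eq σ hσ k]
  rw [MeasureTheory.integral_const_mul, mgf_gpdf σ hσ, ← Real.exp_add]
  congr 1
  field_simp
  ring

/-- For the mixture `μ = (1-q)μ₀ + qμ₁` of Gaussians `μ₀ = N(0,σ²)`, `μ₁ = N(1,σ²)`,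
and integer `α ≥ 2`,
`E_{z∼μ₀}[(μ(z)/μ₀(z))^α] = ∑_{k=0}^{α} C(α,k) (1-q)^{α-k} q^k exp((k²-k)/(2σ²))`. -/
theorem sgm_moment_binomial (σ q : ℝ) (hσ : 0 < σ) (hq0 : 0 < q) (hq1 : q ≤ 1)
    (α : ℕ) (hα : 2 ≤ α) :
    (∫ z : ℝ, (mixpdf q σ z / gpdf 0 σ z) ^ α * gpdf 0 σ z)
      = ∑ k ∈ Finset.range (α + 1),
          (α.choose k : ℝ) * (1 - q) ^ (α - k) * q ^ k *
            Real.exp (((k : ℝ) ^ 2 - k) / (2 * σ ^ 2)) := by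
  have hg : ∀ z : ℝ, gpdf 0 σ z ≠ 0 := fun z => (gpdf_pos σ hσ 0 z).ne'
  have hpt : ∀ z : ℝ, (mixpdf q σ z / gpdf 0 σ z) ^ α * gpdf 0 σ z
      = ∑ k ∈ Finset.range (α + 1), ((α.choose k : ℝ) * (1 - q) ^ (α - k) * q ^ k) *
          (Real.exp ((2 * z - 1) / (2 * σ ^ 2)) ^ k * gpdf 0 σ z) := by
    intro z
    have hr : mixpdf q σ z / gpdf 0 σ z
        = q * Real.exp ((2 * z - 1) / (2 * σ ^ 2)) + (1 - q) := by
      unfold mixpdf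
      rw [add_div, mul_div_assoc, mul_div_assoc, div_self (hg z), ratio_eq σ hσ z]
      ring
    rw [hr, add_pow, Finset.sum_mul]
    apply Finset.sum_congr rfl
    intro k _
    rw [mul_pow]
    ring
  simp_rw [hpt]
  rw [MeasureTheory.integral_finset_sum]
  · apply Finset.sum_congr rfl
    intro k _
    rw [MeasureTheory.integral_const_mul, term_int σ hσ k]
  · intro k _
    apply Integrable.const_mul
    simp_rw [pow_exp_gpdf_eq σ hσ k]
    exact (integrable_exp_mul_gpdf σ hσ _).const_mul _
end

section
/- The Gaussian mechanism M(D) = f(D) + N(0, σ²C²) where f has ℓ₂-sensitivity C satisfies (α, α/(2σ²))-RDP for every α > 1. -/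
/-!
Both output distributions are products of one-dimensional Gaussians of common variance
`v = σ²C²`, so the Radon–Nikodym derivative between them factorizes over coordinates and the
Rényi moment `∫ (dP/dQ)^α dQ` is the product of the one-dimensional moments. In one dimension,
completing the square gives `p_b · (p_a / p_b)^α = exp (α(α-1)(a-b)²/2v) · p_{b+α(a-b)}`, whence
`D_α(N(a,v) ‖ N(b,v)) = α(a-b)²/2v`. Summing over coordinates,
`D_α = α ‖f x - f y‖² / (2σ²C²) ≤ α / (2σ²)` by the sensitivity bound.
-/

open MeasureTheory ProbabilityTheory

/-- Rényi divergence of order `α` between `P` and `Q`. -/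
noncomputable def renyiDiv {Ω : Type*} [MeasurableSpace Ω] (α : ℝ)
    (P Q : Measure Ω) : ℝ :=
  (α - 1)⁻¹ * Real.log (∫ x, ((P.rnDeriv Q x).toReal) ^ α ∂Q)

open scoped ENNReal NNReal

namespace MeasureTheory

variable {ι : Type*} [Fintype ι] {Ω : ι → Type*} [∀ i, MeasurableSpace (Ω i)]

theorem lintegral_fintype_prod_eq_prod {μ : ∀ i, Measure (Ω i)} [∀ i, IsProbabilityMeasure (μ i)]
    {f : ∀ i, Ω i → ℝ≥0∞} (hf : ∀ i, Measurable (f i)) :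
    ∫⁻ x, ∏ i, f i (x i) ∂Measure.pi μ = ∏ i, ∫⁻ t, f i t ∂μ i := by
  rw [lintegral_prod_eq_prod_lintegral_of_indepFun _ _
    (iIndepFun_pi fun i => (hf i).aemeasurable) fun i => (hf i).comp (measurable_pi_apply i)]
  exact Finset.prod_congr rfl fun i _ => (measurePreserving_eval μ i).lintegral_comp (hf i)

theorem Measure.pi_withDensity {μ : ∀ i, Measure (Ω i)} [∀ i, IsProbabilityMeasure (μ i)]
    {f : ∀ i, Ω i → ℝ≥0∞} (hf : ∀ i, Measurable (f i))
    [∀ i, SigmaFinite ((μ i).withDensity (f i))] :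
    Measure.pi (fun i => (μ i).withDensity (f i)) =
      (Measure.pi μ).withDensity fun x => ∏ i, f i (x i) := by
  refine Measure.pi_eq (μ := fun i => (μ i).withDensity (f i)) fun s hs => ?_
  have hbox : (Set.univ.pi s).indicator (fun x => ∏ i, f i (x i)) =
      fun x => ∏ i, (s i).indicator (f i) (x i) := by
    ext x
    by_cases hx : x ∈ Set.univ.pi s
    · rw [Set.indicator_of_mem hx]
      exact Finset.prod_congr rfl fun i _ => (Set.indicator_of_mem (hx i trivial) _).symm
    · obtain ⟨i, hi⟩ : ∃ i, x i ∉ s i := by simpa using hx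
      rw [Set.indicator_of_notMem hx]
      exact (Finset.prod_eq_zero (Finset.mem_univ i) (Set.indicator_of_notMem hi _)).symm
  rw [withDensity_apply _ (.univ_pi hs), ← lintegral_indicator (.univ_pi hs), hbox,
    lintegral_fintype_prod_eq_prod fun i => (hf i).indicator (hs i)]
  exact Finset.prod_congr rfl fun i _ => by
    rw [lintegral_indicator (hs i), withDensity_apply _ (hs i)]

theorem Measure.rnDeriv_pi {P Q : ∀ i, Measure (Ω i)} [∀ i, IsProbabilityMeasure (P i)]
    [∀ i, IsProbabilityMeasure (Q i)] (hPQ : ∀ i, P i ≪ Q i) :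
    (Measure.pi P).rnDeriv (Measure.pi Q) =ᵐ[Measure.pi Q]
      fun x => ∏ i, (P i).rnDeriv (Q i) (x i) := by
  have hP : Measure.pi P = (Measure.pi Q).withDensity fun x => ∏ i, (P i).rnDeriv (Q i) (x i) :=
    calc Measure.pi P = Measure.pi fun i => (Q i).withDensity ((P i).rnDeriv (Q i)) := by
          congr with i : 1
          exact (Measure.withDensity_rnDeriv_eq _ _ (hPQ i)).symm
      _ = _ := Measure.pi_withDensity fun i => Measure.measurable_rnDeriv _ _
  rw [hP]
  exact Measure.rnDeriv_withDensity _ <| Finset.measurable_prod _ fun i _ =>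
    (Measure.measurable_rnDeriv _ _).comp (measurable_pi_apply i)

end MeasureTheory

theorem renyiDiv_pi {ι : Type*} [Fintype ι] {Ω : ι → Type*} [∀ i, MeasurableSpace (Ω i)]
    {P Q : ∀ i, Measure (Ω i)} [∀ i, IsProbabilityMeasure (P i)]
    [∀ i, IsProbabilityMeasure (Q i)] (hPQ : ∀ i, P i ≪ Q i) (α : ℝ)
    (hmoment : ∀ i, ∫ t, ((P i).rnDeriv (Q i) t).toReal ^ α ∂Q i ≠ 0) :
    renyiDiv α (Measure.pi P) (Measure.pi Q) = ∑ i, renyiDiv α (P i) (Q i) := by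
  have hprod : ∫ x, ((Measure.pi P).rnDeriv (Measure.pi Q) x).toReal ^ α ∂Measure.pi Q =
      ∏ i, ∫ t, ((P i).rnDeriv (Q i) t).toReal ^ α ∂Q i := by
    rw [← integral_fintype_prod_eq_prod]
    refine integral_congr_ae ?_
    filter_upwards [Measure.rnDeriv_pi hPQ] with x hx
    rw [hx, ENNReal.toReal_prod, Real.finsetProd_rpow _ _ fun i _ => ENNReal.toReal_nonneg]
  rw [renyiDiv, hprod, Real.log_prod fun i _ => hmoment i, Finset.mul_sum]
  rfl

section Gaussian

variable {v : ℝ≥0}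

theorem gaussianReal_absolutelyContinuous_gaussianReal (a b : ℝ) (hv : v ≠ 0) :
    gaussianReal a v ≪ gaussianReal b v :=
  (gaussianReal_absolutelyContinuous a hv).trans (gaussianReal_absolutelyContinuous' b hv)

theorem rnDeriv_gaussianReal_gaussianReal (a b : ℝ) (hv : v ≠ 0) :
    (gaussianReal a v).rnDeriv (gaussianReal b v) =ᵐ[gaussianReal b v]
      fun t => gaussianPDF a v t / gaussianPDF b v t := by
  have hb := gaussianReal_absolutelyContinuous b hv
  filter_upwards [Measure.rnDeriv_eq_div (gaussianReal_absolutelyContinuous a hv) hb,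
      hb.ae_le (rnDeriv_gaussianReal a v),
      hb.ae_le (rnDeriv_gaussianReal b v)] with t hdiv hpa hpb
  rw [hdiv, hpa, hpb]

theorem gaussianPDFReal_mul_div_rpow (a b : ℝ) (hv : v ≠ 0) (α t : ℝ) :
    gaussianPDFReal b v t * (gaussianPDFReal a v t / gaussianPDFReal b v t) ^ α =
      Real.exp (α * (α - 1) * (a - b) ^ 2 / (2 * v)) * gaussianPDFReal (b + α * (a - b)) v t := by
  have hv' : (v : ℝ) ≠ 0 := by positivity
  have hratio : gaussianPDFReal a v t / gaussianPDFReal b v t =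
      Real.exp (((t - b) ^ 2 - (t - a) ^ 2) / (2 * v)) := by
    rw [gaussianPDFReal, gaussianPDFReal, mul_div_mul_left _ _ (by positivity), ← Real.exp_sub]
    congr 1
    field_simp
    ring
  rw [hratio, ← Real.exp_mul, gaussianPDFReal, gaussianPDFReal, mul_assoc, ← Real.exp_add,
    mul_left_comm, ← Real.exp_add]
  congr 2
  field_simp
  ring

theorem integral_rnDeriv_rpow_gaussianReal (a b : ℝ) (hv : v ≠ 0) (α : ℝ) :
    ∫ t, ((gaussianReal a v).rnDeriv (gaussianReal b v) t).toReal ^ α ∂gaussianReal b v =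
      Real.exp (α * (α - 1) * (a - b) ^ 2 / (2 * v)) := by
  calc _ = ∫ t, (gaussianPDFReal a v t / gaussianPDFReal b v t) ^ α ∂gaussianReal b v := by
        refine integral_congr_ae ?_
        filter_upwards [rnDeriv_gaussianReal_gaussianReal a b hv] with t ht
        rw [ht, ENNReal.toReal_div, toReal_gaussianPDF, toReal_gaussianPDF]
    _ = ∫ t, Real.exp (α * (α - 1) * (a - b) ^ 2 / (2 * v)) *
          gaussianPDFReal (b + α * (a - b)) v t := by
        simp_rw [integral_gaussianReal_eq_integral_smul hv, smul_eq_mul,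
          gaussianPDFReal_mul_div_rpow a b hv]
    _ = _ := by rw [integral_const_mul, integral_gaussianPDFReal_eq_one _ hv, mul_one]

theorem renyiDiv_gaussianReal (a b : ℝ) (hv : v ≠ 0) {α : ℝ} (hα : α ≠ 1) :
    renyiDiv α (gaussianReal a v) (gaussianReal b v) = α * (a - b) ^ 2 / (2 * v) := by
  have hα' : α - 1 ≠ 0 := sub_ne_zero.mpr hα
  rw [renyiDiv, integral_rnDeriv_rpow_gaussianReal a b hv, Real.log_exp]
  field_simp

theorem map_add_pi_gaussianReal {ι : Type*} [Fintype ι] (m : ι → ℝ) :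
    (Measure.pi fun _ : ι => gaussianReal 0 v).map (fun z => m + z) =
      Measure.pi fun i => gaussianReal (m i) v := by
  rw [show (fun z => m + z) = fun z i => m i + z i from rfl,
    Measure.pi_map_pi fun i => (measurable_const_add (m i)).aemeasurable]
  simp only [gaussianReal_map_const_add, zero_add]

theorem renyiDiv_map_add_pi_gaussianReal {ι : Type*} [Fintype ι] (m₁ m₂ : ι → ℝ) (hv : v ≠ 0)
    {α : ℝ} (hα : α ≠ 1) :
    renyiDiv α ((Measure.pi fun _ : ι => gaussianReal 0 v).map (fun z => m₁ + z))
        ((Measure.pi fun _ : ι => gaussianReal 0 v).map (fun z => m₂ + z)) =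
      α * (∑ i, (m₁ i - m₂ i) ^ 2) / (2 * v) := by
  have hmoment (i : ι) : ∫ t, ((gaussianReal (m₁ i) v).rnDeriv (gaussianReal (m₂ i) v) t).toReal ^ α
      ∂gaussianReal (m₂ i) v ≠ 0 := by
    rw [integral_rnDeriv_rpow_gaussianReal _ _ hv]
    exact (Real.exp_pos _).ne'
  rw [map_add_pi_gaussianReal, map_add_pi_gaussianReal,
    renyiDiv_pi (fun i => gaussianReal_absolutelyContinuous_gaussianReal _ _ hv) α hmoment,
    Finset.mul_sum, Finset.sum_div]
  simp_rw [renyiDiv_gaussianReal _ _ hv hα]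

end Gaussian

/-- The Gaussian mechanism `M(D) = f(D) + N(0, σ²C² I_d)`, where `f` has
`ℓ₂`-sensitivity `C`, satisfies `(α, α/(2σ²))`-RDP for every `α > 1`. -/
theorem gaussian_mechanism_rdp {D : Type*} (adj : D → D → Prop) (d : ℕ)
    (f : D → (Fin d → ℝ)) (C σ : ℝ) (hC : 0 < C) (hσ : 0 < σ)
    (hsens : ∀ x y, adj x y → Real.sqrt (∑ i, (f x i - f y i) ^ 2) ≤ C)
    (α : ℝ) (hα : 1 < α) :
    ∀ x y, adj x y →
      renyiDiv α
        (Measure.map (fun z => f x + z)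
          (Measure.pi fun _ : Fin d => gaussianReal 0 ⟨σ ^ 2 * C ^ 2, by positivity⟩))
        (Measure.map (fun z => f y + z)
          (Measure.pi fun _ : Fin d => gaussianReal 0 ⟨σ ^ 2 * C ^ 2, by positivity⟩))
      ≤ α / (2 * σ ^ 2) := by
  intro x y hxy
  have hv : (⟨σ ^ 2 * C ^ 2, by positivity⟩ : ℝ≥0) ≠ 0 :=
    ne_of_gt (show (0 : ℝ) < σ ^ 2 * C ^ 2 by positivity)
  have hdist : ∑ i, (f x i - f y i) ^ 2 ≤ C ^ 2 := (Real.sqrt_le_left hC.le).mp (hsens x y hxy)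
  rw [renyiDiv_map_add_pi_gaussianReal _ _ hv hα.ne']
  calc (α * ∑ i, (f x i - f y i) ^ 2) / (2 * (σ ^ 2 * C ^ 2))
      ≤ α * C ^ 2 / (2 * (σ ^ 2 * C ^ 2)) := by gcongr
    _ = α / (2 * σ ^ 2) := by field_simp
end
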